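/- Fix 0 < μ < v̄. For any posted price v₁ with 0 < v₁ ≤ μ, the infimum over F in the mean ambiguity set 𝓕_mean of the ratio v₁·F([v₁, v̄]) / OPT(F) equals min{ v₁/v̄, (μ − v₁)/(v̄ − v₁) }. Moreover, for any posted price v₁ with μ < v₁ ≤ v̄, this infimum equals 0. -/

import Mathlib

/-!
Write `q = F([v₁, v̄])`. Pointwise `t ≤ v₁ + (v̄ - v₁)·1[t ≥ v₁]` on `[0, v̄]`, so the mean
constraint forces `q ≥ (μ - v₁)/(v̄ - v₁)`; prices below `v₁` earn at most `v₁` and prices above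
earn at most `v̄ q`, so `OPT(F) ≤ max(v₁, v̄ q)` and the ratio is at least
`v₁ q / max(v₁, v̄ q) = min(q, v₁/v̄)`. Conversely, the two-point law with mean `μ` putting mass
`q = (μ - x)/(v̄ - x)` on `v̄` and the rest on `x < v₁` has ratio at most `v₁ q / max(x, v̄ q)`,
which tends to the bound as `x → v₁⁻`. For `v₁ > μ` the point mass at `μ` never buys.
-/

open MeasureTheory Set

noncomputable section

/-- Hindsight optimal revenue: `OPT(F) = sup_{p ∈ [0, v̄]} p · F([p, v̄])`. -/
def hindsightOpt (vbar : ℝ) (F : Measure ℝ) : ℝ :=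
  ⨆ p : Icc (0 : ℝ) vbar, (p : ℝ) * (F (Icc (p : ℝ) vbar)).toReal

/-- The mean ambiguity set: probability measures on `[0, v̄]` with mean at least `μ`. -/
def Fmean (μ vbar : ℝ) : Set (Measure ℝ) :=
  {F | IsProbabilityMeasure F ∧ F (Icc (0 : ℝ) vbar) = 1 ∧ μ ≤ ∫ t, t ∂F}

lemma mul_div_max_eq_min {a b q : ℝ} (ha : 0 < a) (hb : 0 < b) :
    a * q / max a (b * q) = min q (a / b) := by
  rcases le_total (b * q) a with hba | hab
  · rw [max_eq_left hba, mul_div_cancel_left₀ _ ha.ne',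
      min_eq_left ((le_div_iff₀ hb).2 (by linarith))]
  · have hq : 0 < q := pos_of_mul_pos_right (ha.trans_le hab) hb.le
    rw [max_eq_right hab, mul_div_mul_right _ _ hq.ne',
      min_eq_right ((div_le_iff₀ hb).2 (by linarith))]

lemma hindsightOpt_nonneg (vbar : ℝ) (F : Measure ℝ) : 0 ≤ hindsightOpt vbar F :=
  Real.iSup_nonneg fun p => mul_nonneg p.2.1 measureReal_nonneg

lemma le_hindsightOpt {vbar p : ℝ} (F : Measure ℝ) [IsFiniteMeasure F] (hp : p ∈ Icc 0 vbar) :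
    p * F.real (Icc p vbar) ≤ hindsightOpt vbar F := by
  refine le_ciSup (f := fun p : Icc (0 : ℝ) vbar => (p : ℝ) * F.real (Icc (p : ℝ) vbar))
    ⟨vbar * F.real univ, ?_⟩ ⟨p, hp⟩
  rintro _ ⟨r, rfl⟩
  exact mul_le_mul r.2.2 (measureReal_mono (subset_univ _)) measureReal_nonneg (hp.1.trans hp.2)

lemma hindsightOpt_le_max {vbar : ℝ} (v1 : ℝ) (hvbar : 0 ≤ vbar) (F : Measure ℝ)
    [IsProbabilityMeasure F] :
    hindsightOpt vbar F ≤ max v1 (vbar * F.real (Icc v1 vbar)) := by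
  have : Nonempty (Icc (0 : ℝ) vbar) := ⟨⟨0, le_rfl, hvbar⟩⟩
  refine ciSup_le fun ⟨p, hp0, hpv⟩ => ?_
  rcases le_total p v1 with hpv1 | hv1p
  · calc p * F.real (Icc p vbar) ≤ p := mul_le_of_le_one_right hp0 measureReal_le_one
      _ ≤ _ := hpv1.trans (le_max_left _ _)
  · calc p * F.real (Icc p vbar) ≤ vbar * F.real (Icc v1 vbar) :=
          mul_le_mul hpv (measureReal_mono (Icc_subset_Icc_left hv1p)) measureReal_nonneg hvbar
      _ ≤ _ := le_max_right _ _

lemma integral_id_le_add_mul_measureReal_Icc {vbar : ℝ} (v1 : ℝ) {F : Measure ℝ}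
    [IsProbabilityMeasure F] (hF : ∀ᵐ t ∂F, t ∈ Icc 0 vbar) :
    ∫ t, t ∂F ≤ v1 + (vbar - v1) * F.real (Icc v1 vbar) := by
  have hbound : ∀ᵐ t ∂F, t ≤ v1 + (Icc v1 vbar).indicator (fun _ => vbar - v1) t := by
    filter_upwards [hF] with t ⟨_, htv⟩
    by_cases ht : t ∈ Icc v1 vbar
    · rw [indicator_of_mem ht]; linarith
    · rw [indicator_of_notMem ht]
      linarith [not_le.1 fun h => ht ⟨h, htv⟩]
  have hint : Integrable (fun t => v1 + (Icc v1 vbar).indicator (fun _ => vbar - v1) t) F :=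
    (integrable_const _).add ((integrable_const _).indicator measurableSet_Icc)
  calc ∫ t, t ∂F ≤ ∫ t, v1 + (Icc v1 vbar).indicator (fun _ => vbar - v1) t ∂F :=
        integral_mono_of_nonneg (hF.mono fun t ht => ht.1) hint hbound
    _ = v1 + (vbar - v1) * F.real (Icc v1 vbar) := by
        rw [integral_add (integrable_const _) ((integrable_const _).indicator measurableSet_Icc),
          integral_indicator_const _ measurableSet_Icc]
        simp [mul_comm]

def competitiveRatio (vbar v1 : ℝ) (F : Measure ℝ) : ℝ :=
  v1 * F.real (Icc v1 vbar) / hindsightOpt vbar F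

lemma competitiveRatio_nonneg {vbar v1 : ℝ} (hv1 : 0 ≤ v1) (F : Measure ℝ) :
    0 ≤ competitiveRatio vbar v1 F :=
  div_nonneg (mul_nonneg hv1 measureReal_nonneg) (hindsightOpt_nonneg vbar F)

lemma min_le_competitiveRatio {μ vbar v1 : ℝ} (hv1 : 0 < v1) (hv1v : v1 < vbar) {F : Measure ℝ}
    (hF : F ∈ Fmean μ vbar) :
    min (v1 / vbar) ((μ - v1) / (vbar - v1)) ≤ competitiveRatio vbar v1 F := by
  obtain ⟨hprob, hsupp, hmean⟩ := hF
  have hae : ∀ᵐ t ∂F, t ∈ Icc 0 vbar := by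
    rwa [ae_mem_iff_measure_eq measurableSet_Icc.nullMeasurableSet, measure_univ]
  set q := F.real (Icc v1 vbar)
  have hq : (μ - v1) / (vbar - v1) ≤ q := by
    rw [div_le_iff₀ (sub_pos.2 hv1v)]
    linarith [integral_id_le_add_mul_measureReal_Icc v1 hae]
  rcases (measureReal_nonneg : 0 ≤ q).eq_or_lt with hq0 | hq0
  · simpa [competitiveRatio, q, ← hq0] using min_le_of_right_le (hq.trans_eq hq0.symm)
  have hopt : 0 < hindsightOpt vbar F :=
    (mul_pos hv1 hq0).trans_le (le_hindsightOpt F ⟨hv1.le, hv1v.le⟩)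
  calc min (v1 / vbar) ((μ - v1) / (vbar - v1)) ≤ min q (v1 / vbar) := by
        rw [min_comm]; exact min_le_min_right _ hq
    _ = v1 * q / max v1 (vbar * q) := (mul_div_max_eq_min hv1 (hv1.trans hv1v)).symm
    _ ≤ competitiveRatio vbar v1 F :=
        div_le_div_of_nonneg_left (by positivity) hopt
          (hindsightOpt_le_max v1 (hv1.trans hv1v).le F)

section TwoPoint

variable {x y q : ℝ}

def twoPoint (x y q : ℝ) : Measure ℝ :=
  ENNReal.ofReal (1 - q) • Measure.dirac x + ENNReal.ofReal q • Measure.dirac y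

lemma twoPoint_apply {s : Set ℝ} (hs : MeasurableSet s) :
    twoPoint x y q s =
      ENNReal.ofReal (1 - q) * s.indicator 1 x + ENNReal.ofReal q * s.indicator 1 y := by
  simp [twoPoint, Measure.dirac_apply' _ hs]

lemma twoPoint_apply_of_mem (hq0 : 0 ≤ q) (hq1 : q ≤ 1) {s : Set ℝ} (hs : MeasurableSet s)
    (hx : x ∈ s) (hy : y ∈ s) : twoPoint x y q s = 1 := by
  simp only [twoPoint_apply hs, indicator_of_mem hx, indicator_of_mem hy, Pi.one_apply, mul_one]
  rw [← ENNReal.ofReal_add (sub_nonneg.2 hq1) hq0, sub_add_cancel, ENNReal.ofReal_one]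

lemma isProbabilityMeasure_twoPoint (hq0 : 0 ≤ q) (hq1 : q ≤ 1) :
    IsProbabilityMeasure (twoPoint x y q) :=
  ⟨twoPoint_apply_of_mem hq0 hq1 MeasurableSet.univ trivial trivial⟩

lemma twoPoint_real_of_notMem_of_mem (hq0 : 0 ≤ q) {s : Set ℝ} (hs : MeasurableSet s)
    (hx : x ∉ s) (hy : y ∈ s) : (twoPoint x y q).real s = q := by
  simp [measureReal_def, twoPoint_apply hs, indicator_of_notMem hx, indicator_of_mem hy, hq0]

lemma integral_id_twoPoint (hq0 : 0 ≤ q) (hq1 : q ≤ 1) :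
    ∫ t, t ∂(twoPoint x y q) = (1 - q) * x + q * y := by
  have hdirac (a : ℝ) : Integrable (fun t : ℝ => t) (Measure.dirac a) :=
    integrable_dirac (by simp)
  rw [twoPoint, integral_add_measure ((hdirac x).smul_measure ENNReal.ofReal_ne_top)
      ((hdirac y).smul_measure ENNReal.ofReal_ne_top),
    integral_smul_measure, integral_smul_measure, integral_dirac, integral_dirac,
    ENNReal.toReal_ofReal (sub_nonneg.2 hq1), ENNReal.toReal_ofReal hq0, smul_eq_mul, smul_eq_mul]

end TwoPoint

lemma sub_div_sub_mem_Icc {μ vbar x : ℝ} (hxμ : x ≤ μ) (hμv : μ < vbar) :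
    (μ - x) / (vbar - x) ∈ Icc (0 : ℝ) 1 :=
  ⟨div_nonneg (by linarith) (by linarith), (div_le_one (by linarith)).2 (by linarith)⟩

lemma twoPoint_mem_Fmean {μ vbar x : ℝ} (hx0 : 0 ≤ x) (hxμ : x ≤ μ) (hμv : μ < vbar) :
    twoPoint x vbar ((μ - x) / (vbar - x)) ∈ Fmean μ vbar := by
  obtain ⟨hq0, hq1⟩ := sub_div_sub_mem_Icc hxμ hμv
  refine ⟨isProbabilityMeasure_twoPoint hq0 hq1,
    twoPoint_apply_of_mem hq0 hq1 measurableSet_Icc ⟨hx0, by linarith⟩ ⟨by linarith, le_rfl⟩,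
    le_of_eq ?_⟩
  rw [integral_id_twoPoint hq0 hq1]
  field_simp [(by linarith : vbar - x ≠ 0)]
  ring

lemma competitiveRatio_twoPoint_le {vbar v1 x q : ℝ} (hx0 : 0 < x) (hxv1 : x < v1)
    (hv1v : v1 ≤ vbar) (hq0 : 0 ≤ q) (hq1 : q ≤ 1) :
    competitiveRatio vbar v1 (twoPoint x vbar q) ≤ v1 * q / max x (vbar * q) := by
  have := isProbabilityMeasure_twoPoint (x := x) (y := vbar) hq0 hq1
  have hxv : x < vbar := hxv1.trans_le hv1v
  have hmass {a : ℝ} (hxa : x < a) (hav : a ≤ vbar) :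
      (twoPoint x vbar q).real (Icc a vbar) = q :=
    twoPoint_real_of_notMem_of_mem hq0 measurableSet_Icc (fun h => hxa.not_ge h.1) ⟨hav, le_rfl⟩
  have hoptx : x ≤ hindsightOpt vbar (twoPoint x vbar q) := by
    have h := le_hindsightOpt (twoPoint x vbar q) ⟨hx0.le, hxv.le⟩
    rwa [measureReal_def, twoPoint_apply_of_mem hq0 hq1 measurableSet_Icc ⟨le_rfl, hxv.le⟩
      ⟨hxv.le, le_rfl⟩, ENNReal.toReal_one, mul_one] at h
  have hoptv : vbar * q ≤ hindsightOpt vbar (twoPoint x vbar q) := by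
    have h := le_hindsightOpt (twoPoint x vbar q) ⟨(hx0.trans hxv).le, le_rfl⟩
    rwa [hmass hxv le_rfl] at h
  rw [competitiveRatio, hmass hxv1 hv1v]
  exact div_le_div_of_nonneg_left (mul_nonneg (hx0.trans hxv1).le hq0)
    (lt_max_of_lt_left hx0) (max_le hoptx hoptv)

lemma bddBelow_range_competitiveRatio {vbar v1 : ℝ} (hv1 : 0 ≤ v1) (S : Set (Measure ℝ)) :
    BddBelow (range fun F : S => competitiveRatio vbar v1 F) :=
  ⟨0, by rintro _ ⟨F, rfl⟩; exact competitiveRatio_nonneg hv1 F⟩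

lemma iInf_competitiveRatio_le_min {μ vbar v1 : ℝ} (hv1 : 0 < v1) (hv1μ : v1 ≤ μ)
    (hμv : μ < vbar) :
    ⨅ F : Fmean μ vbar, competitiveRatio vbar v1 F ≤ min (v1 / vbar) ((μ - v1) / (vbar - v1)) := by
  set q : ℝ → ℝ := fun x => (μ - x) / (vbar - x)
  have hv1v : v1 < vbar := hv1μ.trans_lt hμv
  have hcont : ContinuousAt (fun x => v1 * q x / max x (vbar * q x)) v1 := by
    have hq : ContinuousAt q v1 :=
      (continuousAt_const.sub continuousAt_id).div (continuousAt_const.sub continuousAt_id)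
        (sub_ne_zero.2 hv1v.ne')
    exact (continuousAt_const.mul hq).div (continuousAt_id.max (continuousAt_const.mul hq))
      (lt_max_of_lt_left hv1).ne'
  have hlim := hcont.tendsto.mono_left (nhdsWithin_le_nhds (s := Iio v1))
  rw [mul_div_max_eq_min hv1 (hv1.trans hv1v), min_comm] at hlim
  refine ge_of_tendsto hlim ?_
  filter_upwards [eventually_nhdsWithin_of_eventually_nhds (eventually_gt_nhds hv1),
    self_mem_nhdsWithin] with x hx0 hxv1
  have hxμ : x ≤ μ := hxv1.le.trans hv1μ
  obtain ⟨hq0, hq1⟩ := sub_div_sub_mem_Icc hxμ hμv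
  exact (ciInf_le (bddBelow_range_competitiveRatio hv1.le _)
    ⟨_, twoPoint_mem_Fmean hx0.le hxμ hμv⟩).trans
    (competitiveRatio_twoPoint_le hx0 hxv1 hv1v.le hq0 hq1)

/-- Under the mean ambiguity set, the competitive ratio of a posted price `v₁ ∈ (0, μ]` is
`min{v₁/v̄, (μ - v₁)/(v̄ - v₁)}`, and of a posted price `v₁ ∈ (μ, v̄]` is `0`. -/
theorem stmt4 (μ vbar : ℝ) (hμ : 0 < μ) (hμv : μ < vbar) :
    (∀ v1 : ℝ, 0 < v1 → v1 ≤ μ →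
      (⨅ F : ↥(Fmean μ vbar), v1 * (F.1 (Icc v1 vbar)).toReal / hindsightOpt vbar F.1) =
        min (v1 / vbar) ((μ - v1) / (vbar - v1))) ∧
    (∀ v1 : ℝ, μ < v1 → v1 ≤ vbar →
      (⨅ F : ↥(Fmean μ vbar), v1 * (F.1 (Icc v1 vbar)).toReal / hindsightOpt vbar F.1) = 0) := by
  have hpointMass : twoPoint μ vbar ((μ - μ) / (vbar - μ)) ∈ Fmean μ vbar :=
    twoPoint_mem_Fmean hμ.le le_rfl hμv
  have : Nonempty (Fmean μ vbar) := ⟨⟨_, hpointMass⟩⟩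
  refine ⟨fun v1 hv1 hv1μ => ?_, fun v1 hμv1 hv1v => ?_⟩
  · exact le_antisymm (iInf_competitiveRatio_le_min hv1 hv1μ hμv)
      (le_ciInf fun F => min_le_competitiveRatio hv1 (hv1μ.trans_lt hμv) F.2)
  · have hv1 : 0 < v1 := hμ.trans hμv1
    have hzero : competitiveRatio vbar v1 (twoPoint μ vbar ((μ - μ) / (vbar - μ))) = 0 := by
      rw [competitiveRatio, twoPoint_real_of_notMem_of_mem (by simp) measurableSet_Icc
        (fun h => hμv1.not_ge h.1) ⟨hv1v, le_rfl⟩]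
      simp
    exact le_antisymm
      ((ciInf_le (bddBelow_range_competitiveRatio hv1.le _) ⟨_, hpointMass⟩).trans_eq hzero)
      (le_ciInf fun F => competitiveRatio_nonneg hv1.le F.1)
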